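/- Let R be a 1-normalized quadratic form on ℝ^{d+1}, i.e., R(x) = x₀x_d + R̃(x₁,…,x_{d-1}) for a quadratic form R̃. Let p ∈ ℝ^{d+1} with R(p) = 0 and |p₀| = ‖p‖_∞. Then for all t ≥ 0, ‖g_t p‖_∞ ≤ C·max( dist(p, L₁), ‖p‖/e^t, e^t·dist(p,L₁)²/‖p‖ ), where C depends only on ‖R̃‖, g_t = diag(e^{-t},1,…,1,e^t), L₁ = ℝe₀, and dist is sup-norm distance. Moreover the lower bound max(dist(p,L₁), ‖p‖/e^t) ≤ ‖g_t p‖ holds unconditionally. -/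

import Mathlib

/-!
`g_t` contracts the coordinate along `L₁ = ℝe₀` by `e^{-t}`, expands the last coordinate by `e^t`
and fixes the others, so both bounds can be checked one coordinate at a time. The lower bound is
then immediate for `t ≥ 0`. For the upper bound the only coordinate not trivially controlled is
the expanded one, `e^t p_d`; isotropy `p₀ p_d = -R̃(p)` together with `|p₀| = ‖p‖` gives
`|p_d| ≤ ‖R̃‖ dist(p, L₁)² / ‖p‖`.
-/

/-- The diagonal flow g_t = diag(e^{-t}, 1, …, 1, e^t) on ℝ^{d+1}. -/
noncomputable def gdiag (d : ℕ) (t : ℝ) (x : Fin (d + 1) → ℝ) : Fin (d + 1) → ℝ :=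
  fun i => if (i : ℕ) = 0 then Real.exp (-t) * x i
    else if (i : ℕ) = d then Real.exp t * x i else x i

open Real

lemma pi_norm_le_pi_norm_of_forall {ι : Type*} [Fintype ι] {E : ι → Type*}
    [∀ i, SeminormedAddGroup (E i)] {x y : ∀ i, E i} (h : ∀ i, ‖x i‖ ≤ ‖y i‖) : ‖x‖ ≤ ‖y‖ :=
  (pi_norm_le_iff_of_nonneg (norm_nonneg y)).2 fun i => (h i).trans (norm_le_pi_norm y i)

variable {d : ℕ}

/-- `‖offAxis p‖` is the sup-norm distance from `p` to the line `L₁ = ℝe₀`. -/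
def offAxis (p : Fin (d + 1) → ℝ) : Fin (d + 1) → ℝ := fun i => if (i : ℕ) = 0 then 0 else p i

lemma abs_le_norm_offAxis (p : Fin (d + 1) → ℝ) {i : Fin (d + 1)} (h0 : (i : ℕ) ≠ 0) :
    |p i| ≤ ‖offAxis p‖ := by
  simpa [offAxis, h0] using norm_le_pi_norm (offAxis p) i

lemma norm_middle_le_norm_offAxis (x : Fin (d + 1) → ℝ) :
    ‖(fun i => if (i : ℕ) = 0 then 0 else if (i : ℕ) = d then 0 else x i : Fin (d + 1) → ℝ)‖ ≤
      ‖offAxis x‖ := by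
  refine pi_norm_le_pi_norm_of_forall fun i => ?_
  simp only [offAxis]
  split_ifs <;> simp

lemma gdiag_apply_zero (t : ℝ) (x : Fin (d + 1) → ℝ) : gdiag d t x 0 = exp (-t) * x 0 := by
  simp [gdiag]

lemma gdiag_apply_of_ne_zero (t : ℝ) (x : Fin (d + 1) → ℝ) {i : Fin (d + 1)} (h0 : (i : ℕ) ≠ 0) :
    gdiag d t x i = if (i : ℕ) = d then exp t * x i else x i := by
  simp [gdiag, h0]

section LowerBound

variable {t : ℝ} (x : Fin (d + 1) → ℝ)

lemma abs_le_abs_gdiag_apply (ht : 0 ≤ t) {i : Fin (d + 1)} (h0 : (i : ℕ) ≠ 0) :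
    |x i| ≤ |gdiag d t x i| := by
  rw [gdiag_apply_of_ne_zero t x h0]
  split_ifs
  · rw [abs_mul, abs_exp]
    exact le_mul_of_one_le_left (abs_nonneg _) (one_le_exp ht)
  · rfl

lemma abs_le_exp_mul_abs_gdiag_apply (ht : 0 ≤ t) (i : Fin (d + 1)) :
    |x i| ≤ exp t * |gdiag d t x i| := by
  by_cases h0 : (i : ℕ) = 0
  · obtain rfl : i = 0 := Fin.ext h0
    rw [gdiag_apply_zero, abs_mul, abs_exp, ← mul_assoc, ← exp_add, add_neg_cancel, exp_zero,
      one_mul]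
  · exact (abs_le_abs_gdiag_apply x ht h0).trans
      (le_mul_of_one_le_left (abs_nonneg _) (one_le_exp ht))

lemma norm_offAxis_le_norm_gdiag (ht : 0 ≤ t) : ‖offAxis x‖ ≤ ‖gdiag d t x‖ := by
  refine pi_norm_le_pi_norm_of_forall fun i => ?_
  by_cases h0 : (i : ℕ) = 0
  · simp [offAxis, h0]
  · simpa [offAxis, h0] using abs_le_abs_gdiag_apply x ht h0

lemma norm_le_exp_mul_norm_gdiag (ht : 0 ≤ t) : ‖x‖ ≤ exp t * ‖gdiag d t x‖ := by
  rw [← abs_exp t, ← Real.norm_eq_abs, ← norm_smul]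
  refine pi_norm_le_pi_norm_of_forall fun i => ?_
  simpa [abs_mul] using abs_le_exp_mul_abs_gdiag_apply x ht i

lemma max_norm_offAxis_norm_div_exp_le_norm_gdiag (ht : 0 ≤ t) :
    max ‖offAxis x‖ (‖x‖ / exp t) ≤ ‖gdiag d t x‖ :=
  max_le (norm_offAxis_le_norm_gdiag x ht)
    ((div_le_iff₀' (exp_pos t)).2 (norm_le_exp_mul_norm_gdiag x ht))

end LowerBound

section UpperBound

variable {p : Fin (d + 1) → ℝ}

lemma abs_last_le_of_isotropic {r c : ℝ} (hR : p 0 * p (Fin.last d) + r = 0) (hr : |r| ≤ c)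
    (hp0 : |p 0| = ‖p‖) : |p (Fin.last d)| ≤ c / ‖p‖ := by
  rcases (norm_nonneg p).eq_or_lt with hp | hp
  · have : p = 0 := norm_eq_zero.1 hp.symm
    simp [this]
  · rw [le_div_iff₀ hp, ← hp0, mul_comm, ← abs_mul, show p 0 * p (Fin.last d) = -r by linarith,
      abs_neg]
    exact hr

lemma norm_gdiag_le_of_abs_last_le {CR : ℝ} (hCR : 0 ≤ CR) (t : ℝ)
    (hlast : |p (Fin.last d)| ≤ CR * ‖offAxis p‖ ^ 2 / ‖p‖) (hp0 : |p 0| = ‖p‖) :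
    ‖gdiag d t p‖ ≤ max 1 CR *
      max (max ‖offAxis p‖ (‖p‖ / exp t)) (exp t * ‖offAxis p‖ ^ 2 / ‖p‖) := by
  set M := max (max ‖offAxis p‖ (‖p‖ / exp t)) (exp t * ‖offAxis p‖ ^ 2 / ‖p‖)
  have hD : ‖offAxis p‖ ≤ M := (le_max_left _ _).trans (le_max_left _ _)
  have hM : 0 ≤ M := (norm_nonneg _).trans hD
  have hle : M ≤ max 1 CR * M := le_mul_of_one_le_left hM (le_max_left _ _)
  refine (pi_norm_le_iff_of_nonneg (by positivity)).2 fun i => ?_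
  rw [Real.norm_eq_abs]
  by_cases h0 : (i : ℕ) = 0
  · obtain rfl : i = 0 := Fin.ext h0
    rw [gdiag_apply_zero, abs_mul, abs_exp, hp0, exp_neg, inv_mul_eq_div]
    exact ((le_max_right _ _).trans (le_max_left _ _)).trans hle
  rw [gdiag_apply_of_ne_zero t p h0]
  split_ifs with hd
  · obtain rfl : i = Fin.last d := Fin.ext hd
    calc |exp t * p (Fin.last d)|
        ≤ exp t * (CR * ‖offAxis p‖ ^ 2 / ‖p‖) := by
          rw [abs_mul, abs_exp]
          exact mul_le_mul_of_nonneg_left hlast (exp_pos t).le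
      _ = CR * (exp t * ‖offAxis p‖ ^ 2 / ‖p‖) := by ring
      _ ≤ max 1 CR * M := mul_le_mul (le_max_right _ _) (le_max_right _ _) (by positivity)
          (hCR.trans (le_max_right _ _))
  · exact (abs_le_norm_offAxis p h0).trans (hD.trans hle)

end UpperBound

theorem stmt_12_general (d : ℕ) (CR : ℝ) (hCR : 0 ≤ CR) :
    (∀ (p : Fin (d + 1) → ℝ) (t : ℝ), 0 ≤ t →
      max ‖(fun i => if (i : ℕ) = 0 then 0 else p i : Fin (d + 1) → ℝ)‖ (‖p‖ / Real.exp t) ≤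
        ‖gdiag d t p‖) ∧
    ∃ C : ℝ, 0 < C ∧
      ∀ Rt : (Fin (d + 1) → ℝ) → ℝ,
        (∀ x y : Fin (d + 1) → ℝ,
            (∀ i : Fin (d + 1), (i : ℕ) ≠ 0 → (i : ℕ) ≠ d → x i = y i) → Rt x = Rt y) →
        (∀ x : Fin (d + 1) → ℝ,
            |Rt x| ≤ CR *
              ‖(fun i => if (i : ℕ) = 0 then 0 else if (i : ℕ) = d then 0 else x i :
                  Fin (d + 1) → ℝ)‖ ^ 2) →
        ∀ p : Fin (d + 1) → ℝ,
          p 0 * p (Fin.last d) + Rt p = 0 →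
          |p 0| = ‖p‖ →
          ∀ t : ℝ, 0 ≤ t →
            ‖gdiag d t p‖ ≤
              C * max
                (max ‖(fun i => if (i : ℕ) = 0 then 0 else p i : Fin (d + 1) → ℝ)‖
                  (‖p‖ / Real.exp t))
                (Real.exp t *
                    ‖(fun i => if (i : ℕ) = 0 then 0 else p i : Fin (d + 1) → ℝ)‖ ^ 2 / ‖p‖) := by
  refine ⟨fun p t ht => max_norm_offAxis_norm_div_exp_le_norm_gdiag p ht,
    max 1 CR, lt_max_of_lt_left one_pos, ?_⟩
  intro Rt _ hRt p hR hp0 t _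
  have hRp : |Rt p| ≤ CR * ‖offAxis p‖ ^ 2 :=
    (hRt p).trans (by gcongr; exact norm_middle_le_norm_offAxis p)
  exact norm_gdiag_le_of_abs_last_le hCR t (abs_last_le_of_isotropic hR hRp hp0) hp0

/-- For a 1-normalized quadratic form R(x) = x₀x_d + R̃(x₁,…,x_{d-1}) with ‖R̃‖ ≤ CR,
and any p with R(p) = 0 and |p₀| = ‖p‖, one has the unconditional lower bound
max(dist(p,L₁), ‖p‖/e^t) ≤ ‖g_t p‖, and the upper bound
‖g_t p‖ ≤ C·max(dist(p,L₁), ‖p‖/e^t, e^t·dist(p,L₁)²/‖p‖) with C depending only on CR.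
Here dist(p, L₁) = max_{i ≥ 1} |p_i| is the sup-norm distance to L₁ = ℝe₀. -/
theorem stmt_12 (d : ℕ) (hd : 1 ≤ d) (CR : ℝ) (hCR : 0 ≤ CR) :
    (∀ (p : Fin (d + 1) → ℝ) (t : ℝ), 0 ≤ t →
      max ‖(fun i => if (i : ℕ) = 0 then 0 else p i : Fin (d + 1) → ℝ)‖ (‖p‖ / Real.exp t) ≤
        ‖gdiag d t p‖) ∧
    ∃ C : ℝ, 0 < C ∧
      ∀ Rt : (Fin (d + 1) → ℝ) → ℝ,
        (∀ x y : Fin (d + 1) → ℝ,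
            (∀ i : Fin (d + 1), (i : ℕ) ≠ 0 → (i : ℕ) ≠ d → x i = y i) → Rt x = Rt y) →
        (∀ x : Fin (d + 1) → ℝ,
            |Rt x| ≤ CR *
              ‖(fun i => if (i : ℕ) = 0 then 0 else if (i : ℕ) = d then 0 else x i :
                  Fin (d + 1) → ℝ)‖ ^ 2) →
        ∀ p : Fin (d + 1) → ℝ,
          p 0 * p (Fin.last d) + Rt p = 0 →
          |p 0| = ‖p‖ →
          ∀ t : ℝ, 0 ≤ t →
            ‖gdiag d t p‖ ≤
              C * max
                (max ‖(fun i => if (i : ℕ) = 0 then 0 else p i : Fin (d + 1) → ℝ)‖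
                  (‖p‖ / Real.exp t))
                (Real.exp t *
                    ‖(fun i => if (i : ℕ) = 0 then 0 else p i : Fin (d + 1) → ℝ)‖ ^ 2 / ‖p‖) :=
  stmt_12_general d CR hCR
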